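/- arXiv:2502.03244 — 2 statements merged into one kernel-verified Lean document; each statement's English description precedes it below -/
import Mathlib

section
/- Let M be an n×n row-stochastic matrix, p, q ∈ ℝⁿ probability vectors with qᵀM = pᵀ, and x ∈ ℝⁿ. Then ∑_i q[i] ((Mx)_i)² = ∑_j p[j] x_j² - (1/2) ∑_{i,k,l} q[i] M[i,k] M[i,l] (x_k - x_l)². In particular, ∑_i q[i] ((Mx)_i)² ≤ ∑_j p[j] x_j². -/
open Matrix Finset

/-!
Row by row, `(M x)ᵢ` is the mean of `x` under the distribution `M i ·`, so its square is the
second moment `∑ₖ M i k x_k²` minus the variance `½ ∑ₖ,ₗ M i k M i l (x_k - x_l)²`.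
Averaging over `i` with weights `q`, the second moments add up to `(qᵀM) x² = pᵀ x²`.
-/

theorem sum_sum_mul_mul_sub_sq {ι R : Type*} [CommRing R] (s : Finset ι) (w x : ι → R) :
    ∑ k ∈ s, ∑ l ∈ s, w k * w l * (x k - x l) ^ 2 =
      2 * ((∑ k ∈ s, w k) * ∑ k ∈ s, w k * x k ^ 2 - (∑ k ∈ s, w k * x k) ^ 2) := by
  have expand : ∀ k l, w k * w l * (x k - x l) ^ 2 =
      w l * (w k * x k ^ 2) + w k * (w l * x l ^ 2) - 2 * ((w k * x k) * (w l * x l)) := by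
    intro k l; ring
  simp only [expand, sum_add_distrib, sum_sub_distrib, ← mul_sum, ← sum_mul]
  ring

theorem mulVec_apply_sq_of_sum_row_eq_one {m n K : Type*} [Fintype n] [Field K]
    [NeZero (2 : K)] (M : Matrix m n K) (x : n → K) (i : m) (hrow : ∑ j, M i j = 1) :
    (M *ᵥ x) i ^ 2 =
      (M *ᵥ x ^ 2) i - 1 / 2 * ∑ k, ∑ l, M i k * M i l * (x k - x l) ^ 2 := by
  rw [sum_sum_mul_mul_sub_sq, hrow]
  simp only [mulVec, dotProduct, Pi.pow_apply]
  field_simp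
  ring

theorem sum_mul_mulVec_apply_sq_of_sum_row_eq_one {m n K : Type*} [Fintype m] [Fintype n]
    [Field K] [NeZero (2 : K)] (M : Matrix m n K) (hrow : ∀ i, ∑ j, M i j = 1)
    (q : m → K) (x : n → K) :
    ∑ i, q i * (M *ᵥ x) i ^ 2 =
      ∑ j, (q ᵥ* M) j * x j ^ 2 -
        1 / 2 * ∑ i, ∑ k, ∑ l, q i * (M i k * M i l * (x k - x l) ^ 2) := by
  have second_moments : ∑ j, (q ᵥ* M) j * x j ^ 2 = ∑ i, q i * (M *ᵥ x ^ 2) i := by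
    exact (dotProduct_mulVec q M (x ^ 2)).symm
  simp only [second_moments, mulVec_apply_sq_of_sum_row_eq_one M x _ (hrow _), mul_sub,
    sum_sub_distrib, mul_sum, mul_left_comm]

theorem abs_prob_weighted_norm_identity_general {n : ℕ} (M : Matrix (Fin n) (Fin n) ℝ)
    (hM : ∀ i j, 0 ≤ M i j) (hrow : ∀ i, ∑ j, M i j = 1)
    (p q : Fin n → ℝ)
    (hq : ∀ i, 0 ≤ q i)
    (habs : Matrix.vecMul q M = p) (x : Fin n → ℝ) :
    (∑ i, q i * (M.mulVec x i)^2 =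
      ∑ j, p j * (x j)^2 -
        (1/2) * ∑ i, ∑ k, ∑ l, q i * (M i k * M i l * (x k - x l)^2)) ∧
    ∑ i, q i * (M.mulVec x i)^2 ≤ ∑ j, p j * (x j)^2 := by
  have identity := sum_mul_mulVec_apply_sq_of_sum_row_eq_one M hrow q x
  rw [habs] at identity
  have dispersion_nonneg :
      0 ≤ ∑ i, ∑ k, ∑ l, q i * (M i k * M i l * (x k - x l) ^ 2) := by
    refine sum_nonneg fun i _ => sum_nonneg fun k _ => sum_nonneg fun l _ => ?_
    have := hq i; have := hM i k; have := hM i l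
    positivity
  exact ⟨identity, by linarith⟩

theorem abs_prob_weighted_norm_identity {n : ℕ} (M : Matrix (Fin n) (Fin n) ℝ)
    (hM : ∀ i j, 0 ≤ M i j) (hrow : ∀ i, ∑ j, M i j = 1)
    (p q : Fin n → ℝ)
    (hp : ∀ i, 0 ≤ p i) (hpsum : ∑ i, p i = 1)
    (hq : ∀ i, 0 ≤ q i) (hqsum : ∑ i, q i = 1)
    (habs : Matrix.vecMul q M = p) (x : Fin n → ℝ) :
    (∑ i, q i * (M.mulVec x i)^2 =
      ∑ j, p j * (x j)^2 -
        (1/2) * ∑ i, ∑ k, ∑ l, q i * (M i k * M i l * (x k - x l)^2)) ∧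
    ∑ i, q i * (M.mulVec x i)^2 ≤ ∑ j, p j * (x j)^2 :=
  abs_prob_weighted_norm_identity_general M hM hrow p q hq habs x
end

section
/- Let Π = diag(p) where p is a probability vector with all entries positive, and p_max = max_i p[i]. Let L be a symmetric positive semidefinite matrix with L𝟙 = 0, and L̃ = Π^{-1/2} L Π^{-1/2}. Then λ₂(L̃) ≥ p_max^{-1} λ₂(L), where λ₂ denotes the second smallest eigenvalue. -/
/-!
Both eigenvalue bounds come from Courant–Fischer. Since `L̃` is symmetric, some `x ≠ 0` with
`x ⊥ √p` lies in the span of the eigenvectors of the two smallest eigenvalues of `L̃`, so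
`xᵀ L̃ x ≤ λ₂(L̃) ‖x‖²`. Put `y = Π^{-1/2} x`. Then `xᵀ L̃ x = yᵀ L y`, `‖x‖² = ∑ pᵢ yᵢ²` and
`∑ pᵢ yᵢ = 0`. Centering `y` to `z = y - c 𝟙` with `z ⊥ 𝟙` leaves `yᵀ L y` unchanged because
`L 𝟙 = 0`. Because `y` has weighted mean zero, centering can only increase the weighted second
moment, so `∑ pᵢ yᵢ² ≤ ∑ pᵢ zᵢ² ≤ p_max ‖z‖²`. Finally `λ₂(L) ‖z‖² ≤ zᵀ L z`, since `𝟙` is an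
eigenvector for the smallest eigenvalue `0` of `L`.
-/

open Matrix Finset

/-- The second smallest eigenvalue (counted with multiplicity) of a Hermitian
real matrix: the entry at index 1 of the increasingly sorted list of eigenvalues. -/
noncomputable def lambda2 {n : ℕ} (A : Matrix (Fin n) (Fin n) ℝ)
    (hA : A.IsHermitian) : ℝ :=
  ((Finset.univ.val.map hA.eigenvalues).sort (· ≤ ·)).getD 1 0

theorem sort_map_univ_eq_ofFn_comp_sort {α : Type*} [LinearOrder α] {n : ℕ} (f : Fin n → α) :
    (univ.val.map f).sort (· ≤ ·) = List.ofFn (f ∘ Tuple.sort f) := by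
  have hperm : univ.val.map f = (List.ofFn (f ∘ Tuple.sort f) : Multiset α) := by
    rw [← Fin.univ_val_map, ← Multiset.map_map, Multiset.map_univ_val_equiv]
  rw [hperm, Multiset.coe_sort]
  exact List.mergeSort_eq_self _ (by simpa using (Tuple.monotone_sort f).sortedLE_ofFn.pairwise)

theorem OrthonormalBasis.sum_dotProduct_mul_dotProduct {ι m : Type*} [Fintype ι] [Fintype m]
    (b : OrthonormalBasis ι ℝ (EuclideanSpace ℝ m)) (x y : m → ℝ) :
    ∑ i, (⇑(b i) ⬝ᵥ x) * (⇑(b i) ⬝ᵥ y) = x ⬝ᵥ y := by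
  simpa [EuclideanSpace.inner_eq_star_dotProduct, dotProduct_comm] using
    b.sum_inner_mul_inner (WithLp.toLp 2 x) (WithLp.toLp 2 y)

theorem OrthonormalBasis.dotProduct_eq_ite {ι m : Type*} [Fintype ι] [Fintype m] [DecidableEq ι]
    (b : OrthonormalBasis ι ℝ (EuclideanSpace ℝ m)) (i j : ι) :
    ⇑(b i) ⬝ᵥ ⇑(b j) = if i = j then 1 else 0 := by
  simpa [EuclideanSpace.inner_eq_star_dotProduct, dotProduct_comm] using
    orthonormal_iff_ite.1 b.orthonormal i j

namespace Matrix.IsHermitian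

variable {m : Type*} [Fintype m] [DecidableEq m] {A : Matrix m m ℝ} (hA : A.IsHermitian)

theorem eigenvectorBasis_dotProduct_mulVec (i : m) (y : m → ℝ) :
    ⇑(hA.eigenvectorBasis i) ⬝ᵥ A *ᵥ y = hA.eigenvalues i * (⇑(hA.eigenvectorBasis i) ⬝ᵥ y) := by
  rw [dotProduct_mulVec, ← mulVec_transpose, (isHermitian_iff_isSymm.1 hA).eq,
    mulVec_eigenvectorBasis, smul_dotProduct, smul_eq_mul]

theorem dotProduct_mulVec_eq_sum (x : m → ℝ) :
    x ⬝ᵥ A *ᵥ x = ∑ i, hA.eigenvalues i * (⇑(hA.eigenvectorBasis i) ⬝ᵥ x) ^ 2 := by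
  rw [← hA.eigenvectorBasis.sum_dotProduct_mul_dotProduct]
  simp only [eigenvectorBasis_dotProduct_mulVec]
  exact sum_congr rfl fun i _ => by ring

theorem dotProduct_self_eq_sum (x : m → ℝ) :
    x ⬝ᵥ x = ∑ i, (⇑(hA.eigenvectorBasis i) ⬝ᵥ x) ^ 2 := by
  simp only [sq, hA.eigenvectorBasis.sum_dotProduct_mul_dotProduct]

end Matrix.IsHermitian

theorem Matrix.IsSymm.dotProduct_mulVec_sub_smul {m : Type*} [Fintype m] {L : Matrix m m ℝ}
    (hL : L.IsSymm) {v : m → ℝ} (hv : L *ᵥ v = 0) (y : m → ℝ) (c : ℝ) :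
    (y - c • v) ⬝ᵥ L *ᵥ (y - c • v) = y ⬝ᵥ L *ᵥ y := by
  have hvL : v ⬝ᵥ L *ᵥ y = 0 := by
    rw [dotProduct_mulVec, ← mulVec_transpose, hL.eq, hv, zero_dotProduct]
  rw [mulVec_sub, mulVec_smul, hv, smul_zero, sub_zero, sub_dotProduct, smul_dotProduct, hvL,
    smul_zero, sub_zero]

theorem dotProduct_mulVec_diagonal_mul_mul_diagonal {m R : Type*} [Fintype m] [DecidableEq m]
    [CommRing R] (d : m → R) (L : Matrix m m R) (x : m → R) :
    x ⬝ᵥ (diagonal d * L * diagonal d) *ᵥ x = (d * x) ⬝ᵥ L *ᵥ (d * x) := by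
  have h₁ : diagonal d *ᵥ x = d * x := funext fun i => mulVec_diagonal d x i
  have h₂ : x ᵥ* diagonal d = d * x := funext fun i => (vecMul_diagonal x d i).trans (mul_comm _ _)
  rw [← mulVec_mulVec, ← mulVec_mulVec, dotProduct_mulVec, h₁, h₂]

theorem sum_mul_sq_le_sum_mul_sub_sq {ι : Type*} [Fintype ι] {p y : ι → ℝ} (hp : ∀ i, 0 ≤ p i)
    (hy : ∑ i, p i * y i = 0) (c : ℝ) : ∑ i, p i * y i ^ 2 ≤ ∑ i, p i * (y i - c) ^ 2 := by
  have h : ∑ i, p i * (y i - c) ^ 2 =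
      ∑ i, p i * y i ^ 2 - 2 * c * ∑ i, p i * y i + c ^ 2 * ∑ i, p i := by
    simp only [mul_sum, ← sum_sub_distrib, ← sum_add_distrib]
    exact sum_congr rfl fun i _ => by ring
  rw [h, hy]
  nlinarith [sum_nonneg fun i (_ : i ∈ univ) => hp i, sq_nonneg c]

section lambda2

variable {n : ℕ} {A : Matrix (Fin n) (Fin n) ℝ}

theorem lambda2_eq_zero_of_lt_two (hA : A.IsHermitian) (hn : n < 2) : lambda2 A hA = 0 :=
  List.getD_eq_default _ _ (by simpa using Nat.le_of_lt_succ hn)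

theorem exists_eigenvalues_le_lambda2 (hA : A.IsHermitian) (hn : 1 < n) :
    ∃ i₀ i₁, i₀ ≠ i₁ ∧ hA.eigenvalues i₀ ≤ lambda2 A hA ∧ hA.eigenvalues i₁ = lambda2 A hA ∧
      ∀ i ≠ i₀, lambda2 A hA ≤ hA.eigenvalues i := by
  set σ := Tuple.sort hA.eigenvalues
  have hmono : Monotone (hA.eigenvalues ∘ σ) := Tuple.monotone_sort _
  have hl₂ : lambda2 A hA = hA.eigenvalues (σ ⟨1, hn⟩) := by
    rw [lambda2, sort_map_univ_eq_ofFn_comp_sort, List.getD_eq_getElem _ _ (by simpa using hn)]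
    simp [σ]
  refine ⟨σ ⟨0, by omega⟩, σ ⟨1, hn⟩, σ.injective.ne (by simp), ?_, hl₂.symm, fun i hi => ?_⟩
  · rw [hl₂]
    exact hmono (Fin.mk_le_mk.2 zero_le_one)
  · rw [hl₂, ← σ.apply_symm_apply i]
    have h0 : σ.symm i ≠ ⟨0, by omega⟩ := fun h => hi (by rw [← h, σ.apply_symm_apply])
    exact hmono (Fin.mk_le_of_le_val (by simpa [Fin.ext_iff, Nat.one_le_iff_ne_zero] using h0))

theorem lambda2_nonneg (hA : A.PosSemidef) : 0 ≤ lambda2 A hA.1 := by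
  rcases lt_or_ge n 2 with hn | hn
  · exact (lambda2_eq_zero_of_lt_two hA.1 hn).ge
  obtain ⟨-, i₁, -, -, hi₁, -⟩ := exists_eigenvalues_le_lambda2 hA.1 hn
  exact hi₁ ▸ hA.eigenvalues_nonneg i₁

theorem lambda2_mul_dotProduct_self_le (hA : A.PosSemidef) {v z : Fin n → ℝ}
    (hv : A *ᵥ v = 0) (hv₀ : v ≠ 0) (hz : v ⬝ᵥ z = 0) :
    lambda2 A hA.1 * (z ⬝ᵥ z) ≤ z ⬝ᵥ A *ᵥ z := by
  rcases le_or_gt (lambda2 A hA.1) 0 with hl₂ | hl₂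
  · exact (mul_nonpos_of_nonpos_of_nonneg hl₂ (dotProduct_self_star_nonneg z)).trans
      (by simpa using hA.dotProduct_mulVec_nonneg z)
  have hn : 1 < n := by
    by_contra! hn
    exact hl₂.ne' (lambda2_eq_zero_of_lt_two hA.1 (by omega))
  obtain ⟨i₀, -, -, -, -, hge⟩ := exists_eigenvalues_le_lambda2 hA.1 hn
  set u := hA.1.eigenvectorBasis
  -- every eigenvalue other than the one at `i₀` is positive, so the kernel vector `v` is along `u i₀`
  have hv_coord : ∀ i ≠ i₀, ⇑(u i) ⬝ᵥ v = 0 := fun i hi => by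
    have h := hA.1.eigenvectorBasis_dotProduct_mulVec i v
    rw [hv, dotProduct_zero, eq_comm] at h
    exact (mul_eq_zero.1 h).resolve_left (hl₂.trans_le (hge i hi)).ne'
  have hv_coord₀ : ⇑(u i₀) ⬝ᵥ v ≠ 0 := by
    intro h
    refine hv₀ (dotProduct_self_eq_zero.1 ?_)
    rw [hA.1.dotProduct_self_eq_sum]
    refine sum_eq_zero fun i _ => (pow_eq_zero_iff two_ne_zero).2 ?_
    rcases eq_or_ne i i₀ with rfl | hi
    exacts [h, hv_coord i hi]
  have hz_coord₀ : ⇑(u i₀) ⬝ᵥ z = 0 := by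
    have h := u.sum_dotProduct_mul_dotProduct v z
    rw [hz, sum_eq_single i₀ (fun i _ hi => by simp [hv_coord i hi]) (by simp)] at h
    exact (mul_eq_zero.1 h).resolve_left hv_coord₀
  rw [hA.1.dotProduct_mulVec_eq_sum, hA.1.dotProduct_self_eq_sum, mul_sum]
  refine sum_le_sum fun i _ => ?_
  rcases eq_or_ne i i₀ with rfl | hi
  · simp [u, hz_coord₀]
  · exact mul_le_mul_of_nonneg_right (hge i hi) (sq_nonneg _)

theorem exists_dotProduct_mulVec_le_lambda2_mul (hA : A.IsHermitian) (hn : 1 < n)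
    (w : Fin n → ℝ) : ∃ x ≠ 0, w ⬝ᵥ x = 0 ∧ x ⬝ᵥ A *ᵥ x ≤ lambda2 A hA * (x ⬝ᵥ x) := by
  obtain ⟨i₀, i₁, hne, hle, heq, -⟩ := exists_eigenvalues_le_lambda2 hA hn
  set u₀ : Fin n → ℝ := ⇑(hA.eigenvectorBasis i₀)
  set u₁ : Fin n → ℝ := ⇑(hA.eigenvectorBasis i₁)
  obtain ⟨a, b, hab, hw⟩ :
      ∃ a b : ℝ, 0 < a ^ 2 + b ^ 2 ∧ a * (w ⬝ᵥ u₀) + b * (w ⬝ᵥ u₁) = 0 := by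
    rcases eq_or_ne (w ⬝ᵥ u₀) 0 with h | h
    · exact ⟨1, 0, by norm_num, by simp [h]⟩
    · exact ⟨-(w ⬝ᵥ u₁), w ⬝ᵥ u₀, add_pos_of_nonneg_of_pos (sq_nonneg _) (sq_pos_of_ne_zero h),
        by ring⟩
  have h00 : u₀ ⬝ᵥ u₀ = 1 := by simp [u₀, OrthonormalBasis.dotProduct_eq_ite]
  have h11 : u₁ ⬝ᵥ u₁ = 1 := by simp [u₁, OrthonormalBasis.dotProduct_eq_ite]
  have h01 : u₀ ⬝ᵥ u₁ = 0 := by simp [u₀, u₁, OrthonormalBasis.dotProduct_eq_ite, hne]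
  have hxx : (a • u₀ + b • u₁) ⬝ᵥ (a • u₀ + b • u₁) = a ^ 2 + b ^ 2 := by
    simp only [add_dotProduct, dotProduct_add, smul_dotProduct, dotProduct_smul, smul_eq_mul,
      h00, h11, h01, dotProduct_comm u₁ u₀]
    ring
  refine ⟨a • u₀ + b • u₁, fun h => by simp [h] at hxx; linarith, ?_, ?_⟩
  · simpa [dotProduct_add, dotProduct_smul] using hw
  · have hAx : A *ᵥ (a • u₀ + b • u₁) =
        (a * hA.eigenvalues i₀) • u₀ + (b * hA.eigenvalues i₁) • u₁ := by
      simp only [mulVec_add, mulVec_smul, u₀, u₁, hA.mulVec_eigenvectorBasis, smul_smul]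
    rw [hAx, hxx]
    simp only [add_dotProduct, dotProduct_add, smul_dotProduct, dotProduct_smul, smul_eq_mul,
      h00, h11, h01, dotProduct_comm u₁ u₀]
    nlinarith [sq_nonneg a, sq_nonneg b]

theorem lambda2_mul_sum_mul_sq_le {L : Matrix (Fin n) (Fin n) ℝ} (hL : L.PosSemidef)
    (hker : L *ᵥ (fun _ => 1) = 0) {p : Fin n → ℝ} (hp : ∀ i, 0 ≤ p i) {pmax : ℝ}
    (hpmax : IsGreatest (Set.range p) pmax) {y : Fin n → ℝ} (hy : ∑ i, p i * y i = 0) :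
    lambda2 L hL.1 * ∑ i, p i * y i ^ 2 ≤ pmax * (y ⬝ᵥ L *ᵥ y) := by
  obtain ⟨⟨i₁, rfl⟩, hle⟩ := hpmax
  set c := (∑ i, y i) / n
  set z := y - c • fun _ => (1 : ℝ)
  have hz : (fun _ => (1 : ℝ)) ⬝ᵥ z = 0 := by
    have hn : (n : ℝ) ≠ 0 := Nat.cast_ne_zero.2 (Fin.pos i₁).ne'
    simp [z, c, dotProduct, sum_sub_distrib, mul_div_cancel₀ _ hn]
  have hpz : ∑ i, p i * y i ^ 2 ≤ p i₁ * (z ⬝ᵥ z) := by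
    refine (sum_mul_sq_le_sum_mul_sub_sq hp hy c).trans ?_
    rw [dotProduct, mul_sum]
    exact sum_le_sum fun i _ => by
      simpa [z, sq] using mul_le_mul_of_nonneg_right (hle ⟨i, rfl⟩) (mul_self_nonneg (y i - c))
  have hz_bound := lambda2_mul_dotProduct_self_le hL hker (fun h => by simpa using congrFun h i₁) hz
  calc lambda2 L hL.1 * ∑ i, p i * y i ^ 2 ≤ lambda2 L hL.1 * (p i₁ * (z ⬝ᵥ z)) :=
        mul_le_mul_of_nonneg_left hpz (lambda2_nonneg hL)
    _ = p i₁ * (lambda2 L hL.1 * (z ⬝ᵥ z)) := by ring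
    _ ≤ p i₁ * (z ⬝ᵥ L *ᵥ z) := mul_le_mul_of_nonneg_left hz_bound (hp i₁)
    _ = p i₁ * (y ⬝ᵥ L *ᵥ y) := by
      rw [(isHermitian_iff_isSymm.1 hL.1).dotProduct_mulVec_sub_smul hker]

end lambda2

theorem lambda2_scaled_lower_bound_general {n : ℕ}
    (p : Fin n → ℝ) (hp : ∀ i, 0 < p i)
    (pmax : ℝ) (hpmax : IsGreatest (Set.range p) pmax)
    (L : Matrix (Fin n) (Fin n) ℝ) (hL : L.IsHermitian)
    (hpsd : ∀ x : Fin n → ℝ, 0 ≤ x ⬝ᵥ L.mulVec x)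
    (hker : L.mulVec (fun _ => 1) = 0)
    (Lt : Matrix (Fin n) (Fin n) ℝ)
    (hLt : Lt = (Matrix.diagonal fun i => (Real.sqrt (p i))⁻¹) * L *
        (Matrix.diagonal fun i => (Real.sqrt (p i))⁻¹))
    (hLtH : Lt.IsHermitian) :
    pmax⁻¹ * lambda2 L hL ≤ lambda2 Lt hLtH := by
  rcases lt_or_ge n 2 with hn | hn
  · simp [lambda2_eq_zero_of_lt_two, hn]
  have hLpsd : L.PosSemidef := .of_dotProduct_mulVec_nonneg hL (by simpa using hpsd)
  obtain ⟨x, hx₀, hxw, hxq⟩ := exists_dotProduct_mulVec_le_lambda2_mul hLtH hn fun i => √(p i)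
  set y := (fun i => (√(p i))⁻¹) * x
  have hy : ∑ i, p i * y i = 0 := by
    rw [← hxw]
    exact sum_congr rfl fun i _ => by simp [y, ← mul_assoc, ← div_eq_mul_inv, Real.div_sqrt]
  have hyy : ∑ i, p i * y i ^ 2 = x ⬝ᵥ x := by
    refine sum_congr rfl fun i _ => ?_
    simp only [y, Pi.mul_apply, mul_pow, inv_pow, Real.sq_sqrt (hp i).le]
    field_simp [(hp i).ne']
  have hpmax₀ : 0 < pmax := by
    obtain ⟨i, rfl⟩ := hpmax.1
    exact hp i
  have hxx : 0 < x ⬝ᵥ x := by simpa using dotProduct_self_star_pos_iff.2 hx₀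
  have key := lambda2_mul_sum_mul_sq_le hLpsd hker (fun i => (hp i).le) hpmax hy
  rw [hyy, ← dotProduct_mulVec_diagonal_mul_mul_diagonal, ← hLt] at key
  rw [inv_mul_le_iff₀ hpmax₀]
  refine le_of_mul_le_mul_right (key.trans ?_) hxx
  rw [mul_assoc]
  exact mul_le_mul_of_nonneg_left hxq hpmax₀.le

theorem lambda2_scaled_lower_bound {n : ℕ}
    (p : Fin n → ℝ) (hp : ∀ i, 0 < p i) (hpsum : ∑ i, p i = 1)
    (pmax : ℝ) (hpmax : IsGreatest (Set.range p) pmax)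
    (L : Matrix (Fin n) (Fin n) ℝ) (hL : L.IsHermitian)
    (hpsd : ∀ x : Fin n → ℝ, 0 ≤ x ⬝ᵥ L.mulVec x)
    (hker : L.mulVec (fun _ => 1) = 0)
    (Lt : Matrix (Fin n) (Fin n) ℝ)
    (hLt : Lt = (Matrix.diagonal fun i => (Real.sqrt (p i))⁻¹) * L *
        (Matrix.diagonal fun i => (Real.sqrt (p i))⁻¹))
    (hLtH : Lt.IsHermitian) :
    pmax⁻¹ * lambda2 L hL ≤ lambda2 Lt hLtH :=
  lambda2_scaled_lower_bound_general p hp pmax hpmax L hL hpsd hker Lt hLt hLtH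
end
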